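/- Let n ≥ 2, k ≥ 1, and let c : Fin n → ((Fin n → Fin k) → ℝ) be the payoff functions of a potential n-player finite game in which every player has strategy set Fin k. Index the players 1,…,n and write ⊤ for the last strategy k−1 : Fin k. For a profile s and 2 ≤ j ≤ n−1, let u_j(s) be the profile whose coordinate 1 equals ⊤, whose coordinates 2,…,j agree with s, and whose coordinates j+1,…,n equal ⊤; and let v_j(s) agree with u_j(s) except that coordinate j also equals ⊤. Then the function p defined by p(s) = c₁(s) + (cₙ − c₁)(update s 1 ⊤) − ∑_{j=2}^{n−1} [ (cₙ − c_j)(u_j(s)) − (cₙ − c_j)(v_j(s)) ] is a potential function of the game. -/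
import Mathlib


/-- An `n`-player finite game with payoff functions `c` (each player has strategy
set `Fin k`) is potential if it admits a potential function `p`. -/
def IsPotentialGame {n k : ℕ} (c : Fin n → (Fin n → Fin k) → ℝ) : Prop :=
  ∃ p : (Fin n → Fin k) → ℝ,
    ∀ (i : Fin n) (s : Fin n → Fin k) (x y : Fin k),
      c i (Function.update s i x) - c i (Function.update s i y) =
        p (Function.update s i x) - p (Function.update s i y)

/-- `uProf top j s` is the profile whose first coordinate (index `0`, i.e. player `1`)
is `top`, whose coordinates of index `1, …, j` (players `2, …, j+1`) agree with `s`,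
and whose remaining coordinates are `top`. -/
def uProf {n k : ℕ} (top : Fin k) (j : Fin n) (s : Fin n → Fin k) : Fin n → Fin k :=
  fun t => if (t : ℕ) = 0 then top else if (t : ℕ) ≤ (j : ℕ) then s t else top

/-- `vProf top j s` agrees with `uProf top j s` except that coordinate `j`
(player `j+1`) also equals `top`. -/
def vProf {n k : ℕ} (top : Fin k) (j : Fin n) (s : Fin n → Fin k) : Fin n → Fin k :=
  Function.update (uProf top j s) j top

def Uaux {n k : ℕ} (top : Fin k) (s : Fin n → Fin k) (M : ℕ) : Fin n → Fin k :=
  fun t => if (t : ℕ) = 0 then top else if (t : ℕ) ≤ M then s t else top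

lemma uProf_eq_Uaux {n k : ℕ} (top : Fin k) (j : Fin n) (s : Fin n → Fin k) :
    uProf top j s = Uaux top s (j : ℕ) := rfl

lemma Uaux_zero {n k : ℕ} (top : Fin k) (s : Fin n → Fin k) :
    Uaux top s 0 = fun _ => top := by
  funext t; simp only [Uaux]; split_ifs with h1 h2 <;> first | rfl | omega

lemma vProf_eq_Uaux {n k : ℕ} (top : Fin k) (j : Fin n) (s : Fin n → Fin k)
    (hj : 1 ≤ (j : ℕ)) : vProf top j s = Uaux top s ((j : ℕ) - 1) := by
  funext t
  simp only [vProf, uProf, Uaux, Function.update_apply]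
  by_cases htj : t = j
  · subst htj
    split_ifs <;> first | rfl | omega
  · have : (t : ℕ) ≠ (j : ℕ) := fun h => htj (Fin.ext h)
    simp only [htj, if_false]
    split_ifs <;> first | rfl | omega

lemma Uaux_apply_self {n k : ℕ} (top : Fin k) (s : Fin n → Fin k) (M : ℕ) (j : Fin n)
    (h0 : (j : ℕ) ≠ 0) (hM : (j : ℕ) ≤ M) : Uaux top s M j = s j := by
  simp only [Uaux]; split_ifs <;> first | rfl | omega

lemma Uaux_apply_top {n k : ℕ} (top : Fin k) (s : Fin n → Fin k) (M : ℕ) (j : Fin n)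
    (hM : M < (j : ℕ)) : Uaux top s M j = top := by
  simp only [Uaux]; split_ifs <;> first | rfl | omega

lemma Uaux_last {k m : ℕ} (top : Fin k) (s : Fin (m + 2) → Fin k) (fst : Fin (m + 2))
    (hfst : (fst : ℕ) = 0) : Uaux top s (m + 1) = Function.update s fst top := by
  funext t
  simp only [Uaux, Function.update_apply]
  by_cases htf : t = fst
  · subst htf; simp [hfst]
  · have h1 : (t : ℕ) ≠ 0 := fun h => htf (Fin.ext (by omega))
    have h2 : (t : ℕ) ≤ m + 1 := by omega
    simp [htf, h1, h2]

lemma Uaux_update_last {k m : ℕ} (top : Fin k) (s : Fin (m + 2) → Fin k)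
    (lst : Fin (m + 2)) (hlst : (lst : ℕ) = m + 1) :
    Function.update (Uaux top s m) lst (s lst) = Uaux top s (m + 1) := by
  funext t
  simp only [Uaux, Function.update_apply]
  by_cases htl : t = lst
  · subst htl; split_ifs <;> first | rfl | omega
  · have : (t : ℕ) ≠ (lst : ℕ) := fun h => htl (Fin.ext h)
    simp only [htl, if_false]
    split_ifs <;> first | rfl | omega

lemma tele_sum (G : ℕ → ℝ) (m : ℕ) :
    ∑ j ∈ Finset.range (m + 2), (if 1 ≤ j ∧ j ≤ m then G j - G (j - 1) else 0)
      = G m - G 0 := by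
  induction m with
  | zero => simp [Finset.sum_range_succ]
  | succ m ih =>
    rw [show m + 1 + 2 = (m + 2) + 1 by ring, Finset.sum_range_succ]
    have h1 : ∑ j ∈ Finset.range (m + 2), (if 1 ≤ j ∧ j ≤ m + 1 then G j - G (j - 1) else 0)
        = ∑ j ∈ Finset.range (m + 1), (if 1 ≤ j ∧ j ≤ m then G j - G (j - 1) else 0)
          + (G (m + 1) - G m) := by
      rw [Finset.sum_range_succ]
      congr 1
      · exact Finset.sum_congr rfl fun j hj => by
          simp only [Finset.mem_range] at hj
          have : (1 ≤ j ∧ j ≤ m + 1) ↔ (1 ≤ j ∧ j ≤ m) := by omega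
          exact if_congr this rfl rfl
      · simp
    have h2 : ∑ j ∈ Finset.range (m + 1), (if 1 ≤ j ∧ j ≤ m then G j - G (j - 1) else 0)
        = G m - G 0 := by
      rw [Finset.sum_range_succ] at ih
      simpa using ih
    rw [h1, h2]
    have : ¬ (1 ≤ m + 2 ∧ m + 2 ≤ m + 1) := by omega
    simp only [this, if_false]
    ring

theorem stmt15 (n k : ℕ) (hn : 2 ≤ n) (hk : 1 ≤ k)
    (c : Fin n → (Fin n → Fin k) → ℝ) (hpot : IsPotentialGame c)
    (top : Fin k) (htop : (top : ℕ) = k - 1)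
    (fst lst : Fin n) (hfst : (fst : ℕ) = 0) (hlst : (lst : ℕ) = n - 1)
    (p : (Fin n → Fin k) → ℝ)
    (hp : ∀ s : Fin n → Fin k,
      p s = c fst s
        + (c lst (Function.update s fst top) - c fst (Function.update s fst top))
        - ∑ j : Fin n,
            if 1 ≤ (j : ℕ) ∧ (j : ℕ) ≤ n - 2 then
              (c lst (uProf top j s) - c j (uProf top j s))
                - (c lst (vProf top j s) - c j (vProf top j s))
            else 0) :
    ∀ (i : Fin n) (s : Fin n → Fin k) (x y : Fin k),
      c i (Function.update s i x) - c i (Function.update s i y) =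
        p (Function.update s i x) - p (Function.update s i y) := by
  obtain ⟨q, hq⟩ := hpot
  obtain ⟨m, rfl⟩ : ∃ m, n = m + 2 := ⟨n - 2, by omega⟩
  have hlst1 : (lst : ℕ) = m + 1 := by omega
  have key : ∀ s : Fin (m + 2) → Fin k,
      p s = q s + (c lst (fun _ => top) - q (fun _ => top)) := by
    intro s
    -- step 1: changing coordinate `fst`
    have h1 : c fst s - c fst (Function.update s fst top)
        = q s - q (Function.update s fst top) := by
      have h := hq fst s (s fst) top
      rwa [Function.update_eq_self] at h
    -- step 2: changing coordinate `lst`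
    have h2 : c lst (Uaux top s (m + 1)) - c lst (Uaux top s m)
        = q (Uaux top s (m + 1)) - q (Uaux top s m) := by
      have h := hq lst (Uaux top s m) (s lst) top
      have e0 : Uaux top s m lst = top := Uaux_apply_top top s m lst (by omega)
      have e1 : Function.update (Uaux top s m) lst (s lst) = Uaux top s (m + 1) :=
        Uaux_update_last top s lst hlst1
      have e2 : Function.update (Uaux top s m) lst top = Uaux top s m := by
        have h' := Function.update_eq_self lst (Uaux top s m)
        rwa [e0] at h'
      rwa [e1, e2] at h
    -- the telescoping sum
    have hsum : (∑ j : Fin (m + 2),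
        if 1 ≤ (j : ℕ) ∧ (j : ℕ) ≤ m + 2 - 2 then
          (c lst (uProf top j s) - c j (uProf top j s))
            - (c lst (vProf top j s) - c j (vProf top j s))
        else 0)
        = (c lst (Uaux top s m) - q (Uaux top s m))
          - (c lst (Uaux top s 0) - q (Uaux top s 0)) := by
      have step : ∀ j : Fin (m + 2),
          (if 1 ≤ (j : ℕ) ∧ (j : ℕ) ≤ m + 2 - 2 then
            (c lst (uProf top j s) - c j (uProf top j s))
              - (c lst (vProf top j s) - c j (vProf top j s))
          else 0)
          = (fun M => if 1 ≤ M ∧ M ≤ m then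
              (c lst (Uaux top s M) - q (Uaux top s M))
                - (c lst (Uaux top s (M - 1)) - q (Uaux top s (M - 1)))
            else 0) (j : ℕ) := by
        intro j
        simp only [Nat.add_sub_cancel]
        by_cases hc : 1 ≤ (j : ℕ) ∧ (j : ℕ) ≤ m
        · have hu := uProf_eq_Uaux top j s
          have hv := vProf_eq_Uaux top j s hc.1
          have h3 : c j (Uaux top s (j : ℕ)) - c j (Uaux top s ((j : ℕ) - 1))
              = q (Uaux top s (j : ℕ)) - q (Uaux top s ((j : ℕ) - 1)) := by
            have h := hq j (Uaux top s (j : ℕ)) (s j) top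
            have e0 : Uaux top s (j : ℕ) j = s j :=
              Uaux_apply_self top s _ j (by omega) le_rfl
            have e1 : Function.update (Uaux top s (j : ℕ)) j (s j)
                = Uaux top s (j : ℕ) := by
              have h' := Function.update_eq_self j (Uaux top s (j : ℕ))
              rwa [e0] at h'
            have e2 : Function.update (Uaux top s (j : ℕ)) j top
                = Uaux top s ((j : ℕ) - 1) := hv
            rwa [e1, e2] at h
          rw [hu, hv]
          simp only [if_pos hc]
          linarith [h3]
        · simp [hc]
      have hrw : (∑ j : Fin (m + 2),
          if 1 ≤ (j : ℕ) ∧ (j : ℕ) ≤ m + 2 - 2 then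
            (c lst (uProf top j s) - c j (uProf top j s))
              - (c lst (vProf top j s) - c j (vProf top j s))
          else 0)
          = ∑ j : Fin (m + 2), (fun M => if 1 ≤ M ∧ M ≤ m then
              (c lst (Uaux top s M) - q (Uaux top s M))
                - (c lst (Uaux top s (M - 1)) - q (Uaux top s (M - 1)))
            else 0) (j : ℕ) := Finset.sum_congr rfl fun j _ => step j
      rw [hrw]
      exact (Fin.sum_univ_eq_sum_range _ (m + 2)).trans
        (tele_sum (fun M => c lst (Uaux top s M) - q (Uaux top s M)) m)
    have hU1 : Function.update s fst top = Uaux top s (m + 1) :=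
      (Uaux_last top s fst hfst).symm
    have hU0 : (fun _ : Fin (m + 2) => top) = Uaux top s 0 := (Uaux_zero top s).symm
    rw [hU1] at h1
    rw [hp s, hU1, hsum, hU0]
    linarith [h1, h2]
  intro i s x y
  rw [key, key, hq i s x y]
  ring
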